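/- arXiv:1102.4436 — 5 statements merged into one kernel-verified Lean document; each statement's English description precedes it below -/
import Mathlib

section
/- For n ≥ 1, let B be the symmetric bilinear form on ℝ^{n+1} defined by B(x, y) = x₀·y₀ − Σ_{i=1}^{n} xᵢ·yᵢ. Let σ : ℝ^{n+1} → ℝ^{n+1} be an ℝ-linear map with B(σu, σv) = B(u, v) for all u, v. Suppose x, f ∈ ℝ^{n+1} satisfy B(x, x) > 0, σ(x) = x and B(f, f) = 0. Then B(f, σ(f)) · B(x, x) ≤ 2 · B(x, f)². -/
/-- The Minkowski bilinear form of signature `(1, n)` on `ℝ^{n+1}`. -/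
def mink {n : ℕ} (x y : Fin (n + 1) → ℝ) : ℝ :=
  x 0 * y 0 - ∑ i : Fin n, x i.succ * y i.succ

lemma mink_comm {n : ℕ} (u v : Fin (n + 1) → ℝ) : mink u v = mink v u := by
  simp [mink, mul_comm]

lemma mink_add_left {n : ℕ} (u v w : Fin (n + 1) → ℝ) :
    mink (u + v) w = mink u w + mink v w := by
  simp [mink, add_mul, Finset.sum_add_distrib]; ring

lemma mink_add_right {n : ℕ} (u v w : Fin (n + 1) → ℝ) :
    mink u (v + w) = mink u v + mink u w := by
  rw [mink_comm, mink_add_left, mink_comm v u, mink_comm w u]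

lemma mink_revCS {n : ℕ} (x y : Fin (n + 1) → ℝ) (hx : 0 < mink x x) :
    mink x x * mink y y ≤ (mink x y) ^ 2 := by
  set p := x 0
  set q := y 0
  set S := ∑ i : Fin n, x i.succ * x i.succ with hS
  set T := ∑ i : Fin n, y i.succ * y i.succ with hT
  set P := ∑ i : Fin n, x i.succ * y i.succ with hP
  have hCS : P ^ 2 ≤ S * T := by
    have h := Finset.sum_mul_sq_le_sq_mul_sq Finset.univ
      (fun i : Fin n => x i.succ) (fun i : Fin n => y i.succ)
    simpa [hS, hT, hP, sq] using h
  have hS0 : 0 ≤ S := Finset.sum_nonneg fun i _ => mul_self_nonneg _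
  have hT0 : 0 ≤ T := Finset.sum_nonneg fun i _ => mul_self_nonneg _
  have hxx : mink x x = p * p - S := rfl
  have hyy : mink y y = q * q - T := rfl
  have hxy : mink x y = p * q - P := rfl
  rw [hxx] at hx
  rw [hxx, hyy, hxy]
  have hA0 : 0 ≤ p^2*T + S*q^2 :=
    add_nonneg (mul_nonneg (sq_nonneg p) hT0) (mul_nonneg hS0 (sq_nonneg q))
  have hA2 : (2*p*q*P)^2 ≤ (p^2*T + S*q^2)^2 := by
    nlinarith [sq_nonneg (p^2*T - S*q^2), mul_le_mul_of_nonneg_left hCS (sq_nonneg (2*p*q))]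
  have h3 : 0 ≤ p^2*T - 2*p*q*P + S*q^2 := by nlinarith [hA2, hA0]
  have hp2 : 0 < p^2 := by nlinarith
  have h4 : 0 ≤ (p*P - S*q)^2 + (p*p - S)*(p^2*T - 2*p*q*P + S*q^2) :=
    add_nonneg (sq_nonneg _) (mul_nonneg hx.le h3)
  have h5 : p^2 * ((p*q - P)^2 - (p*p - S)*(q*q - T)) =
      (p*P - S*q)^2 + (p*p - S)*(p^2*T - 2*p*q*P + S*q^2) := by ring
  nlinarith [h4, h5, hp2]

theorem stmt_3 (n : ℕ) (hn : 1 ≤ n)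
    (σ : (Fin (n + 1) → ℝ) →ₗ[ℝ] (Fin (n + 1) → ℝ))
    (hσ : ∀ u v, mink (σ u) (σ v) = mink u v)
    (x f : Fin (n + 1) → ℝ)
    (hx : 0 < mink x x) (hxfix : σ x = x) (hf : mink f f = 0) :
    mink f (σ f) * mink x x ≤ 2 * (mink x f) ^ 2 := by
  have h1 : mink (σ f) (σ f) = 0 := by rw [hσ]; exact hf
  have h2 : mink x (σ f) = mink x f := by
    conv_lhs => rw [← hxfix]
    rw [hσ]
  have key := mink_revCS x (f + σ f) hx
  rw [mink_add_right, mink_add_left, mink_add_left, mink_comm (σ f) f, h1, hf,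
    mink_add_right, h2] at key
  nlinarith [key]
end

section
/- Let G be the 4×4 integer matrix with G₀₁ = G₁₀ = 1, G₂₃ = G₃₂ = 1 and all other entries 0 (the Gram matrix of U ⊕ U). Then there exists a 4×4 integer matrix τ such that τᵀ · G · τ = G and τ · τ = −I₄. -/
/-- The Gram matrix of `U ⊕ U`, where `U` is the even unimodular hyperbolic plane. -/
def gramUU : Matrix (Fin 4) (Fin 4) ℤ :=
  !![0, 1, 0, 0; 1, 0, 0, 0; 0, 0, 0, 1; 0, 0, 1, 0]

theorem stmt_8 :
    ∃ τ : Matrix (Fin 4) (Fin 4) ℤ,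
      τ.transpose * gramUU * τ = gramUU ∧ τ * τ = -1 := by
  use !![0, 0, -1, 0; 0, 0, 0, -1; 1, 0, 0, 0; 0, 1, 0, 0]
  constructor <;> · ext i j; fin_cases i <;> fin_cases j <;> simp [gramUU, Matrix.mul_apply, Fin.sum_univ_four, Matrix.vecHead, Matrix.vecTail]
end

section
/- Let k ≥ 1 and let D ⊆ ℤ^{4k} be the sublattice D = {x ∈ ℤ^{4k} : Σᵢ xᵢ is even}, equipped with the standard bilinear form ⟨x, y⟩ = Σᵢ xᵢ·yᵢ. Then there exists a ℤ-linear map τ : ℤ^{4k} → ℤ^{4k} such that ⟨τ(x), τ(y)⟩ = ⟨x, y⟩ for all x, y, τ ∘ τ = −id, τ(D) ⊆ D, and for every y ∈ ℚ^{4k} with ⟨y, x⟩ ∈ ℤ for all x ∈ D, one has τ(y) − y ∈ D (where τ is extended ℚ-linearly). -/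
def sig (k : ℕ) (i : Fin (4*k)) : Fin (4*k) :=
  ⟨if i.val % 2 = 0 then i.val + 1 else i.val - 1, by have := i.isLt; split <;> omega⟩

lemma sig_sig (k : ℕ) (i : Fin (4*k)) : sig k (sig k i) = i := by
  simp only [sig]; apply Fin.ext; simp only []; split <;> split <;> omega

def eps (k : ℕ) (i : Fin (4*k)) : ℤ := if i.val % 2 = 0 then -1 else 1

lemma eps_sig (k : ℕ) (i : Fin (4*k)) : eps k (sig k i) = -eps k i := by
  simp only [eps, sig]; split <;> split <;> omega

lemma eps_sq (k : ℕ) (i : Fin (4*k)) : eps k i * eps k i = 1 := by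
  simp only [eps]; split <;> ring

def sigPerm (k : ℕ) : Equiv.Perm (Fin (4*k)) := Function.Involutive.toPerm (sig k) (sig_sig k)

lemma sum_eps (k : ℕ) (f : Fin (4*k) → ℤ) :
    ∑ i, eps k i * f (sig k i) = ∑ j, -eps k j * f j := by
  rw [← Equiv.sum_comp (sigPerm k) (fun i => eps k i * f (sig k i))]
  apply Finset.sum_congr rfl; intro j _
  show eps k (sig k j) * f (sig k (sig k j)) = _
  rw [eps_sig, sig_sig]

lemma card_odds (k : ℕ) :
    (Finset.univ.filter (fun j : Fin (4*k) => j.val % 2 = 1)).card = 2*k := by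
  rw [show 2*k = (Finset.range (2*k)).card by simp]
  apply Finset.card_bij' (fun (j : Fin (4*k)) _ => j.val / 2)
      (fun m hm => (⟨2*m+1, by simp only [Finset.mem_range] at hm; omega⟩ : Fin (4*k)))
  case hi =>
    intro a ha
    simp only [Finset.mem_filter, Finset.mem_univ, true_and] at ha
    simp only [Finset.mem_range]; omega
  case hj =>
    intro m hm
    simp only [Finset.mem_filter, Finset.mem_univ, true_and]
    show (2*m+1) % 2 = 1; omega
  case left_inv =>
    intro a ha
    simp only [Finset.mem_filter, Finset.mem_univ, true_and] at ha
    apply Fin.ext; show 2*(a.val/2)+1 = a.val; omega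
  case right_inv =>
    intro m hm
    simp only [Finset.mem_range] at hm
    show (2*m+1)/2 = m; omega

def tau (k : ℕ) : (Fin (4*k) → ℤ) →ₗ[ℤ] (Fin (4*k) → ℤ) where
  toFun x := fun i => eps k i * x (sig k i)
  map_add' x y := by funext i; simp [mul_add]
  map_smul' c x := by funext i; simp [smul_eq_mul]; ring

def tauQ (k : ℕ) : (Fin (4*k) → ℚ) →ₗ[ℚ] (Fin (4*k) → ℚ) where
  toFun x := fun i => (eps k i : ℚ) * x (sig k i)
  map_add' x y := by funext i; simp [mul_add]
  map_smul' c x := by funext i; simp [smul_eq_mul]; ring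

theorem stmt_10 (k : ℕ) (hk : 1 ≤ k) :
    ∃ (τ : (Fin (4 * k) → ℤ) →ₗ[ℤ] (Fin (4 * k) → ℤ))
      (τQ : (Fin (4 * k) → ℚ) →ₗ[ℚ] (Fin (4 * k) → ℚ)),
      -- τQ is the ℚ-linear extension of τ
      (∀ x : Fin (4 * k) → ℤ, τQ (fun i => (x i : ℚ)) = fun i => ((τ x) i : ℚ)) ∧
      -- τ preserves the standard bilinear form
      (∀ x y : Fin (4 * k) → ℤ, ∑ i, τ x i * τ y i = ∑ i, x i * y i) ∧
      -- τ ∘ τ = -id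
      τ ∘ₗ τ = -LinearMap.id ∧
      -- τ preserves the sublattice D = {x : Σ xᵢ even}
      (∀ x : Fin (4 * k) → ℤ, Even (∑ i, x i) → Even (∑ i, τ x i)) ∧
      -- τ acts trivially on the discriminant group: for y in the dual of D,
      -- τ(y) - y lies in D
      (∀ y : Fin (4 * k) → ℚ,
        (∀ x : Fin (4 * k) → ℤ, Even (∑ i, x i) → ∃ a : ℤ, ∑ i, y i * (x i : ℚ) = a) →
        ∃ d : Fin (4 * k) → ℤ, Even (∑ i, d i) ∧ τQ y - y = fun i => (d i : ℚ)) := by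
  refine ⟨tau k, tauQ k, ?_, ?_, ?_, ?_, ?_⟩
  · -- extension
    intro x; funext i; simp [tau, tauQ]
  · -- form preservation
    intro x y
    have h1 : ∀ i, tau k x i * tau k y i = x (sig k i) * y (sig k i) := by
      intro i
      show (eps k i * x (sig k i)) * (eps k i * y (sig k i)) = _
      calc (eps k i * x (sig k i)) * (eps k i * y (sig k i))
          = (eps k i * eps k i) * (x (sig k i) * y (sig k i)) := by ring
        _ = x (sig k i) * y (sig k i) := by rw [eps_sq]; ring
    simp only [h1]
    exact Equiv.sum_comp (sigPerm k) (fun j => x j * y j)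
  · -- tau ∘ tau = -id
    apply LinearMap.ext; intro x; funext i
    show eps k i * (eps k (sig k i) * x (sig k (sig k i))) = -x i
    rw [eps_sig, sig_sig]
    have h := eps_sq k i
    calc eps k i * (-eps k i * x i) = -((eps k i * eps k i) * x i) := by ring
      _ = -x i := by rw [h]; ring
  · -- parity preservation
    intro x hx
    show Even (∑ i, eps k i * x (sig k i))
    rw [sum_eps]
    have h : Even (∑ i, x i + ∑ j, -eps k j * x j) := by
      rw [← Finset.sum_add_distrib]
      rw [even_iff_two_dvd]
      apply Finset.dvd_sum
      intro j _
      simp only [eps]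
      split
      · exact ⟨x j, by ring⟩
      · exact ⟨0, by ring⟩
    have := h.sub hx
    simpa using this
  · -- discriminant group action
    intro y H
    -- each 2 y i is an integer
    have twoy : ∀ i, ∃ a : ℤ, y i * 2 = (a : ℚ) := by
      intro i
      obtain ⟨a, ha⟩ := H (fun j => if j = i then 2 else 0)
        (by rw [Finset.sum_ite_eq' Finset.univ i]; simp)
      refine ⟨a, ?_⟩
      rw [← ha, Finset.sum_eq_single i]
      · simp
      · intro j _ hj; simp [hj]
      · simp
    set c : Fin (4*k) → ℤ := fun i => (twoy i).choose with hcdef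
    have hc : ∀ i, y i * 2 = ((c i : ℤ) : ℚ) := fun i => (twoy i).choose_spec
    -- pair sums are integers
    have hpair : ∀ a b : Fin (4*k), a ≠ b → ∃ m : ℤ, y a + y b = (m : ℚ) := by
      intro a b hab
      obtain ⟨m, hm⟩ := H (fun j => (if j = a then 1 else 0) + (if j = b then 1 else 0))
        (by rw [Finset.sum_add_distrib, Finset.sum_ite_eq' Finset.univ a,
                Finset.sum_ite_eq' Finset.univ b]; norm_num)
      refine ⟨m, ?_⟩
      rw [← hm]
      have key : ∀ j, y j * ((((if j = a then (1:ℤ) else 0) + if j = b then 1 else 0) : ℤ) : ℚ)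
          = (if j = a then y j else 0) + (if j = b then y j else 0) := by
        intro j
        by_cases h1 : j = a <;> by_cases h2 : j = b
        · exact absurd (h1.symm.trans h2) hab
        · simp [h1, h2, hab, Ne.symm hab]
        · simp [h1, h2, hab, Ne.symm hab]
        · simp [h1, h2, hab, Ne.symm hab]
      rw [Finset.sum_congr rfl (fun j _ => key j), Finset.sum_add_distrib,
          Finset.sum_ite_eq' Finset.univ a, Finset.sum_ite_eq' Finset.univ b]
      simp
    -- all c's have the same parity
    have hParEven : ∀ a b : Fin (4*k), Even (c a + c b) := by
      intro a b
      by_cases hab : a = b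
      · subst hab; exact ⟨c a, rfl⟩
      · obtain ⟨m, hm⟩ := hpair a b hab
        have : ((c a + c b : ℤ) : ℚ) = ((2 * m : ℤ) : ℚ) := by
          push_cast
          rw [← hc a, ← hc b]
          linarith [hm]
        have h2 : c a + c b = 2 * m := by exact_mod_cast this
        exact ⟨m, by omega⟩
    -- the integral vector d
    have hdvd : ∀ i, ∃ t : ℤ, eps k i * c (sig k i) - c i = 2 * t := by
      intro i
      obtain ⟨r, hr⟩ := hParEven (sig k i) i
      have he : eps k i = -1 ∨ eps k i = 1 := by
        simp only [eps]; split
        · left; rfl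
        · right; rfl
      rcases he with h | h <;> rw [h]
      · exact ⟨-r, by omega⟩
      · exact ⟨r - c i, by omega⟩
    choose d hd using hdvd
    refine ⟨d, ?_, ?_⟩
    · -- Even sum of d
      set S := Finset.univ.filter (fun j : Fin (4*k) => j.val % 2 = 1) with hS
      have h2d : 2 * ∑ i, d i = ∑ i, (eps k i * c (sig k i) - c i) := by
        rw [Finset.mul_sum]
        exact Finset.sum_congr rfl (fun i _ => (hd i).symm)
      have hre : ∑ i, (eps k i * c (sig k i) - c i) = ∑ j, (-eps k j * c j - c j) := by
        rw [Finset.sum_sub_distrib, Finset.sum_sub_distrib, sum_eps]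
      have hsplit : ∑ j, (-eps k j * c j - c j) = ∑ j ∈ S, (-2) * c j := by
        rw [hS, Finset.sum_filter]
        apply Finset.sum_congr rfl
        intro j _
        simp only [eps]
        split
        · have : ¬ (j.val % 2 = 1) := by omega
          rw [if_neg this]; ring
        · have : j.val % 2 = 1 := by omega
          rw [if_pos this]; ring
      -- Even (∑ j in S, c j)
      have hj0 : (0 : ℕ) < 4 * k := by omega
      set j0 : Fin (4*k) := ⟨0, hj0⟩ with hj0def
      have hEvenS : Even (∑ j ∈ S, c j) := by
        have e1 : Even (∑ j ∈ S, (c j - c j0)) := by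
          rw [even_iff_two_dvd]
          apply Finset.dvd_sum
          intro j _
          obtain ⟨r, hr⟩ := hParEven j j0
          exact ⟨r - c j0, by omega⟩
        have e2 : ∑ j ∈ S, c j = ∑ j ∈ S, (c j - c j0) + S.card * c j0 := by
          rw [Finset.sum_sub_distrib, Finset.sum_const, nsmul_eq_mul]
          ring
        rw [e2, hS, card_odds]
        exact e1.add ⟨k * c j0, by push_cast; ring⟩
      obtain ⟨r, hr⟩ := hEvenS
      have key2 : 2 * ∑ i, d i = 2 * (-(2 * r)) := by
        rw [h2d, hre, hsplit, ← Finset.mul_sum, hr]; ring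
      have hsum : ∑ i, d i = -(2 * r) := by omega
      exact ⟨-r, by omega⟩
    · -- the equality
      funext i
      simp only [Pi.sub_apply]
      show (eps k i : ℚ) * y (sig k i) - y i = (d i : ℚ)
      have h3 := congrArg (fun z : ℤ => (z : ℚ)) (hd i)
      push_cast at h3
      have h1 := hc (sig k i)
      have h2 := hc i
      rw [← h1, ← h2] at h3
      linarith
end

section
/- Let L ⊆ ℝ^8 be the E8 lattice, L = {x ∈ ℝ^8 : (all coordinates xᵢ lie in ℤ, or all coordinates xᵢ lie in ℤ + 1/2) and Σᵢ xᵢ ∈ 2ℤ}, with the standard Euclidean inner product ⟨x, y⟩ = Σᵢ xᵢ·yᵢ. Then there exists an ℝ-linear map τ : ℝ^8 → ℝ^8 such that ⟨τ(x), τ(y)⟩ = ⟨x, y⟩ for all x, y, τ ∘ τ = −id, and τ(L) = L. -/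
/-- Membership in the `E8` lattice inside `ℝ^8`: all coordinates are integers or
all coordinates are half-integers, and the coordinate sum is an even integer. -/
def memE8 (x : Fin 8 → ℝ) : Prop :=
  ((∀ i, ∃ a : ℤ, x i = a) ∨ (∀ i, ∃ a : ℤ, x i = a + 1 / 2)) ∧
    ∃ b : ℤ, ∑ i, x i = 2 * b

/-- Underlying function of the complex-structure isometry on ℝ^8. -/
def tauFun (x : Fin 8 → ℝ) : Fin 8 → ℝ := fun i =>
  match i with
  | 0 => -x 1 | 1 => x 0 | 2 => -x 3 | 3 => x 2
  | 4 => -x 5 | 5 => x 4 | 6 => -x 7 | 7 => x 6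

/-- The complex-structure isometry on ℝ^8 as a linear map. -/
def tauE8 : (Fin 8 → ℝ) →ₗ[ℝ] (Fin 8 → ℝ) where
  toFun := tauFun
  map_add' x y := by funext i; fin_cases i <;> simp [tauFun] <;> ring
  map_smul' c x := by funext i; fin_cases i <;> simp [tauFun] <;> ring

lemma tauE8_mem (x : Fin 8 → ℝ) (hx : memE8 x) : memE8 (tauE8 x) := by
  obtain ⟨hcoord, b, hb⟩ := hx
  have happ : ∀ i, tauE8 x i = tauFun x i := fun _ => rfl
  constructor
  · rcases hcoord with h | h
    · left
      obtain ⟨a0, h0⟩ := h 0; obtain ⟨a1, h1⟩ := h 1; obtain ⟨a2, h2⟩ := h 2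
      obtain ⟨a3, h3⟩ := h 3; obtain ⟨a4, h4⟩ := h 4; obtain ⟨a5, h5⟩ := h 5
      obtain ⟨a6, h6⟩ := h 6; obtain ⟨a7, h7⟩ := h 7
      intro i
      fin_cases i
      · exact ⟨-a1, by rw [happ]; simp [tauFun, h1]⟩
      · exact ⟨a0, by rw [happ]; simpa [tauFun] using h0⟩
      · exact ⟨-a3, by rw [happ]; simp [tauFun, h3]⟩
      · exact ⟨a2, by rw [happ]; simpa [tauFun] using h2⟩
      · exact ⟨-a5, by rw [happ]; simp [tauFun, h5]⟩
      · exact ⟨a4, by rw [happ]; simpa [tauFun] using h4⟩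
      · exact ⟨-a7, by rw [happ]; simp [tauFun, h7]⟩
      · exact ⟨a6, by rw [happ]; simpa [tauFun] using h6⟩
    · right
      obtain ⟨a0, h0⟩ := h 0; obtain ⟨a1, h1⟩ := h 1; obtain ⟨a2, h2⟩ := h 2
      obtain ⟨a3, h3⟩ := h 3; obtain ⟨a4, h4⟩ := h 4; obtain ⟨a5, h5⟩ := h 5
      obtain ⟨a6, h6⟩ := h 6; obtain ⟨a7, h7⟩ := h 7
      intro i
      fin_cases i
      · exact ⟨-a1 - 1, by rw [happ]; simp [tauFun, h1]; push_cast; ring⟩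
      · exact ⟨a0, by rw [happ]; simpa [tauFun] using h0⟩
      · exact ⟨-a3 - 1, by rw [happ]; simp [tauFun, h3]; push_cast; ring⟩
      · exact ⟨a2, by rw [happ]; simpa [tauFun] using h2⟩
      · exact ⟨-a5 - 1, by rw [happ]; simp [tauFun, h5]; push_cast; ring⟩
      · exact ⟨a4, by rw [happ]; simpa [tauFun] using h4⟩
      · exact ⟨-a7 - 1, by rw [happ]; simp [tauFun, h7]; push_cast; ring⟩
      · exact ⟨a6, by rw [happ]; simpa [tauFun] using h6⟩
  · rw [Fin.sum_univ_eight] at hb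
    rcases hcoord with h | h
    · obtain ⟨a1, h1⟩ := h 1; obtain ⟨a3, h3⟩ := h 3
      obtain ⟨a5, h5⟩ := h 5; obtain ⟨a7, h7⟩ := h 7
      refine ⟨b - (a1 + a3 + a5 + a7), ?_⟩
      rw [Fin.sum_univ_eight]
      simp only [happ]
      simp only [tauFun]
      push_cast
      linarith [hb, h1, h3, h5, h7]
    · obtain ⟨a1, h1⟩ := h 1; obtain ⟨a3, h3⟩ := h 3
      obtain ⟨a5, h5⟩ := h 5; obtain ⟨a7, h7⟩ := h 7
      refine ⟨b - (a1 + a3 + a5 + a7 + 2), ?_⟩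
      rw [Fin.sum_univ_eight]
      simp only [happ]
      simp only [tauFun]
      push_cast
      linarith [hb, h1, h3, h5, h7]

lemma tauE8_sq : tauE8 ∘ₗ tauE8 = -LinearMap.id := by
  apply LinearMap.ext
  intro x
  funext i
  fin_cases i <;> rfl

theorem stmt_11 :
    ∃ τ : (Fin 8 → ℝ) →ₗ[ℝ] (Fin 8 → ℝ),
      (∀ x y : Fin 8 → ℝ, ∑ i, τ x i * τ y i = ∑ i, x i * y i) ∧
      τ ∘ₗ τ = -LinearMap.id ∧
      τ '' {x | memE8 x} = {x | memE8 x} := by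
  refine ⟨tauE8, ?_, tauE8_sq, ?_⟩
  · intro x y
    rw [Fin.sum_univ_eight, Fin.sum_univ_eight]
    have happ : ∀ (z : Fin 8 → ℝ) i, tauE8 z i = tauFun z i := fun _ _ => rfl
    simp only [happ, tauFun]
    ring
  · apply Set.Subset.antisymm
    · rintro y ⟨x, hx, rfl⟩
      exact tauE8_mem x hx
    · intro y hy
      refine ⟨tauE8 (tauE8 (tauE8 y)), tauE8_mem _ (tauE8_mem _ (tauE8_mem _ hy)), ?_⟩
      have e1 : ∀ z, tauE8 (tauE8 z) = -z := by
        intro z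
        have := congrArg (fun f => f z) tauE8_sq
        simpa using this
      rw [e1, e1, neg_neg]
end

section
/- Let G be a symmetric 2×2 integer matrix with even diagonal entries which is positive definite (G₀₀ > 0 and det G > 0), and suppose that the rational matrix 2·G⁻¹ has integer entries. Then there exists a 2×2 integer matrix P with det P = 1 or det P = −1 such that Pᵀ · G · P is the diagonal matrix diag(2, 2). -/
/-!
Write `G = !![2a, b; b, 2c]` and `d = det G = 4ac - b²`. Since `2 • G⁻¹` is integral, its determinant
`4 / d` is an integer, so `d ∣ 4`; as `d ≡ -b² ≡ 0, 3 (mod 4)` this forces `d = 4` and `b = 2e` even.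
Thus `G = 2 • !![a, e; e, c]` with `ac - e² = 1`, and Gauss reduction of this positive definite
unimodular binary form (shear until `2|e| ≤ min a c`, which forces `e = 0`, `a = c = 1`) brings it to
the identity.
-/

open Matrix

variable {n : Type*} [Fintype n] [DecidableEq n]

def IntCongr (A B : Matrix n n ℤ) : Prop :=
  ∃ P : Matrix n n ℤ, IsUnit P.det ∧ Pᵀ * A * P = B

namespace IntCongr

theorem of_mul {A : Matrix n n ℤ} {P : Matrix n n ℤ} (hP : IsUnit P.det) :
    IntCongr A (Pᵀ * A * P) :=
  ⟨P, hP, rfl⟩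

theorem trans {A B C : Matrix n n ℤ} (hAB : IntCongr A B) (hBC : IntCongr B C) :
    IntCongr A C := by
  obtain ⟨P, hP, rfl⟩ := hAB
  obtain ⟨Q, hQ, rfl⟩ := hBC
  refine ⟨P * Q, by simpa only [det_mul] using hP.mul hQ, ?_⟩
  simp only [transpose_mul, Matrix.mul_assoc]

theorem smul {A B : Matrix n n ℤ} (h : IntCongr A B) (k : ℤ) : IntCongr (k • A) (k • B) := by
  obtain ⟨P, hP, rfl⟩ := h
  exact ⟨P, hP, by rw [Matrix.mul_smul, Matrix.smul_mul]⟩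

theorem shear (a e c t : ℤ) :
    IntCongr !![a, e; e, c] !![a, e + a * t; e + a * t, c + 2 * t * e + t * t * a] := by
  convert of_mul (A := !![a, e; e, c]) (P := !![1, t; 0, 1]) (by simp) using 1
  ext i j; fin_cases i <;> fin_cases j <;> simp [mul_apply, Fin.sum_univ_two] <;> ring

theorem swap (a e c : ℤ) : IntCongr !![a, e; e, c] !![c, e; e, a] := by
  convert of_mul (A := !![a, e; e, c]) (P := !![0, 1; 1, 0]) (by simp) using 1
  ext i j; fin_cases i <;> fin_cases j <;> simp [mul_apply, Fin.sum_univ_two]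

end IntCongr

theorem det_dvd_pow_of_smul_inv_integral (G : Matrix n n ℤ) (hG : G.det ≠ 0) (m : ℤ)
    (h : ∀ i j, ∃ a : ℤ, ((m : ℚ) • (G.map ((↑) : ℤ → ℚ))⁻¹) i j = a) :
    G.det ∣ m ^ Fintype.card n := by
  choose M hM using h
  have hMG : ((of M).map ((↑) : ℤ → ℚ)) = (m : ℚ) • (G.map ((↑) : ℤ → ℚ))⁻¹ := by
    ext i j; exact (hM i j).symm
  have hdet : ((of M).det : ℚ) * G.det = (m : ℚ) ^ Fintype.card n := by
    have hGQ : (G.det : ℚ) ≠ 0 := Int.cast_ne_zero.mpr hG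
    rw [Int.cast_det, hMG, det_smul, det_nonsing_inv, ← Int.cast_det,
      Ring.inverse_eq_inv, mul_assoc, inv_mul_cancel₀ hGQ, mul_one]
  exact Dvd.intro_left _ (by exact_mod_cast hdet)

theorem exists_two_mul_abs_add_mul_le (e a : ℤ) (ha : 0 < a) : ∃ t, 2 * |e + a * t| ≤ a := by
  have hdiv := Int.emod_add_mul_ediv e a
  have hr₀ := Int.emod_nonneg e ha.ne'
  have hra := Int.emod_lt_of_pos e ha
  rcases le_or_gt (2 * (e % a)) a with h | h
  · refine ⟨-(e / a), ?_⟩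
    rw [← abs_two, ← abs_mul, abs_le]; constructor <;> linarith
  · refine ⟨-(e / a) - 1, ?_⟩
    rw [← abs_two, ← abs_mul, abs_le]; constructor <;> linarith

theorem exists_intCongr_of_lt_two_mul_abs (a e c : ℤ) (ha : 0 < a) (he : a < 2 * |e|)
    (hdet : a * c - e * e = 1) :
    ∃ e' c', 0 < c' ∧ c' < c ∧ a * c' - e' * e' = 1 ∧
      IntCongr !![a, e; e, c] !![a, e'; e', c'] := by
  obtain ⟨t, ht⟩ := exists_two_mul_abs_add_mul_le e a ha
  refine ⟨e + a * t, c + 2 * t * e + t * t * a, ?_, ?_, by linear_combination hdet,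
    IntCongr.shear a e c t⟩
  · nlinarith [mul_self_nonneg (e + a * t)]
  · have hlt : |e + a * t| < |e| := by linarith
    nlinarith [mul_self_lt_mul_self (abs_nonneg _) hlt, abs_mul_abs_self e,
      abs_mul_abs_self (e + a * t)]

theorem intCongr_one_of_det_eq_one (a e c : ℤ) (ha : 0 < a) (hc : 0 < c)
    (hdet : a * c - e * e = 1) : IntCongr !![a, e; e, c] 1 := by
  induction hs : (a + c).toNat using Nat.strong_induction_on generalizing a e c with
  | _ s ih =>
  by_cases hea : a < 2 * |e|
  · obtain ⟨e', c', hc', hc'c, hdet', hcongr⟩ := exists_intCongr_of_lt_two_mul_abs a e c ha hea hdet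
    exact hcongr.trans (ih _ (by omega) a e' c' ha hc' hdet' rfl)
  by_cases hec : c < 2 * |e|
  · obtain ⟨e', a', ha', ha'a, hdet', hcongr⟩ :=
      exists_intCongr_of_lt_two_mul_abs c e a hc hec (by linear_combination hdet)
    exact (IntCongr.swap a e c).trans
      (hcongr.trans (ih _ (by omega) c e' a' hc ha' (by linear_combination hdet') rfl))
  have he : e = 0 := by
    have h4 : 4 * (e * e) ≤ a * c := by
      nlinarith [mul_le_mul (not_lt.mp hea) (not_lt.mp hec) (by positivity) ha.le,
        abs_mul_abs_self e]
    nlinarith [mul_self_nonneg e]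
  subst he
  have hac : a * c = 1 := by linarith
  obtain ⟨rfl, rfl⟩ : a = 1 ∧ c = 1 :=
    ⟨Int.eq_one_of_mul_eq_one_right ha.le hac, Int.eq_one_of_mul_eq_one_left hc.le hac⟩
  rw [one_fin_two]
  exact ⟨1, by simp, by simp⟩

theorem exists_eq_two_mul_of_dvd_four (a b c : ℤ) (hpos : 0 < 4 * a * c - b * b)
    (hdvd : 4 * a * c - b * b ∣ 4) : ∃ e, b = 2 * e ∧ a * c - e * e = 1 := by
  have hle := Int.le_of_dvd (by norm_num) hdvd
  obtain ⟨k, rfl | rfl⟩ := Int.even_or_odd' b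
  · refine ⟨k, rfl, ?_⟩
    obtain ⟨m, hm⟩ : ∃ m, m = a * c - k * k := ⟨_, rfl⟩
    have hd : 4 * a * c - 2 * k * (2 * k) = 4 * m := by rw [hm]; ring
    omega
  · obtain ⟨m, hm⟩ : ∃ m, m = a * c - k * k - k := ⟨_, rfl⟩
    have hd : 4 * a * c - (2 * k + 1) * (2 * k + 1) = 4 * m - 1 := by rw [hm]; ring
    have h3 : 4 * m - 1 = 3 := by omega
    rw [hd, h3] at hdvd
    norm_num at hdvd

theorem stmt_14 (G : Matrix (Fin 2) (Fin 2) ℤ)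
    (hsymm : G.transpose = G)
    (heven : Even (G 0 0) ∧ Even (G 1 1))
    (hposdef : 0 < G 0 0 ∧ 0 < G.det)
    (h2elem : ∀ i j, ∃ a : ℤ,
      ((2 : ℚ) • (G.map ((↑) : ℤ → ℚ))⁻¹ : Matrix (Fin 2) (Fin 2) ℚ) i j = a) :
    ∃ P : Matrix (Fin 2) (Fin 2) ℤ, (P.det = 1 ∨ P.det = -1) ∧
      P.transpose * G * P = !![2, 0; 0, 2] := by
  obtain ⟨a, ha⟩ := heven.1
  obtain ⟨c, hc⟩ := heven.2
  obtain ⟨b, hb⟩ : ∃ b, G 0 1 = b := ⟨_, rfl⟩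
  have hG : G = !![a + a, b; b, c + c] := by
    have hsym : G 1 0 = G 0 1 := congrFun (congrFun hsymm 0) 1
    rw [eta_fin_two G, ha, hc, hsym, hb]
  have hdet : G.det = 4 * a * c - b * b := by
    rw [hG, det_fin_two_of]; ring
  have hdvd : G.det ∣ 4 := by
    simpa using det_dvd_pow_of_smul_inv_integral G hposdef.2.ne' 2 (by exact_mod_cast h2elem)
  rw [hdet] at hdvd hposdef
  obtain ⟨e, rfl, hunimod⟩ := exists_eq_two_mul_of_dvd_four a b c hposdef.2 hdvd
  have hc₀ : 0 < c := by nlinarith [mul_self_nonneg e]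
  obtain ⟨P, hP, hPG⟩ := (intCongr_one_of_det_eq_one a e c (by omega) hc₀ hunimod).smul 2
  have hG₂ : G = (2 : ℤ) • !![a, e; e, c] := by
    rw [hG]; ext i j; fin_cases i <;> fin_cases j <;> simp <;> ring
  refine ⟨P, Int.isUnit_iff.mp hP, ?_⟩
  rw [hG₂, hPG, one_fin_two]
  simp
end
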